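/- Let I be a closed unbounded set of ordinals with increasing enumeration ν ↦ κ_ν, let B ⊆ I be limit suitable, and let G = I ∩ [λ, δ) be a gap of B with λ ≠ 0. Let σ' be the supremum of the set of members of B below δ that are limit points of I (σ' = 0 if this set is empty). Then σ' < λ, the set I ∩ (σ', λ) is a nonempty subset of B, none of its members is a limit point of I, its order type is exactly ω, and its supremum is λ. (Thus the tail of every gap of B is an ω-sequence of consecutive successor members of I with supremum the foot λ of the gap.) -/

import Mathlib

open Set

noncomputable section

/-- `l` is a limit point of the set `S` of ordinals: `l > 0` and `sup (S ∩ l) = l`. -/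
def IsLimitPoint (S : Set Ordinal) (l : Ordinal) : Prop :=
  0 < l ∧ sSup (S ∩ Iio l) = l

/-- A set of ordinals is closed if it contains all of its limit points. -/
def IsClosedSet (S : Set Ordinal) : Prop :=
  ∀ l, IsLimitPoint S l → l ∈ S

/-- A set of ordinals is unbounded (in the class of all ordinals). -/
def IsUnboundedSet (S : Set Ordinal) : Prop :=
  ∀ a, ∃ b ∈ S, a < b

/-- `B` is a suitable subset of `I`: it is a countable closed subset of `I`, every member of `B`
which is a limit point of `I` of countable cofinality is a limit point of `B`, and `B` is closed
under immediate predecessors in `I`. -/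
def Suitable (I B : Set Ordinal) : Prop :=
  B ⊆ I ∧ B.Countable ∧ IsClosedSet B ∧
  (∀ β ∈ B, IsLimitPoint I β → β.cof ≤ Cardinal.aleph0 → IsLimitPoint B β) ∧
  (∀ β ∈ B, ∀ m, IsGreatest (I ∩ Iio β) m → m ∈ B)

/-- `G` is a gap of `B` (relative to `I`): a maximal nonempty convex subset of `I \ B`. -/
def IsGap (I B G : Set Ordinal) : Prop :=
  G.Nonempty ∧ G ⊆ I \ B ∧
  (∀ x ∈ G, ∀ y ∈ G, ∀ z ∈ I \ B, x ≤ z → z ≤ y → z ∈ G) ∧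
  ∀ G', G ⊆ G' → G' ⊆ I \ B →
    (∀ x ∈ G', ∀ y ∈ G', ∀ z ∈ I \ B, x ≤ z → z ≤ y → z ∈ G') → G' = G

/-- The foot `λ` of a gap `G` of `B`: `sup({0} ∪ {β ∈ B : β < inf G})`. -/
def GapFoot (B G : Set Ordinal) : Ordinal :=
  sSup (insert 0 {β ∈ B | β < sInf G})

/-- `B` is a limit suitable subset of `I`. -/
def LimitSuitable (I B : Set Ordinal) : Prop :=
  Suitable I (B ∪ {l | IsLimitPoint B l}) ∧
  ∀ G, IsGap I B G →
    ((IsUnboundedSet G ∧ G = I ∩ Ici (GapFoot B G)) ∨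
     (∃ δ, IsLeast {β ∈ B | ∀ g ∈ G, g < β} δ ∧
        IsLimitPoint I δ ∧ Cardinal.aleph0 < δ.cof ∧
        G = I ∩ Ico (GapFoot B G) δ)) ∧
    (GapFoot B G ≠ 0 →
      ∃ ν : Ordinal, GapFoot B G = Ordinal.enumOrd I (ν + Ordinal.omega0))

/-!
Write the foot of the gap as `λ = κ_{ξ+ω}` with `ξ` zero or a limit ordinal. The members of `I`
in `[κ_ξ, λ)` are then the points `κ_{ξ+n}`, and all of them except possibly `κ_ξ` are successor
points of `I`. As `λ` is the supremum of `B ∩ λ`, members of `B` occur arbitrarily high in this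
block; since the closure of `B` is closed under immediate predecessors in `I`, it contains every
`κ_{ξ+n}`, and the successor points among them are then in `B` itself. If `κ_ξ` were not in `B`,
its gap would be bounded by `κ_ξ`, so the least member of `B` above it, namely `κ_{ξ+1}`, would
have to be a limit point of `I`. Hence `[κ_ξ, λ)` lies in `B`, the limit points of `I` in `B`
below `δ` are at most `κ_ξ` (and include it when `ξ ≠ 0`), and the tail is a final segment of
the `ω`-block.
-/

open Ordinal Order

section LimitPoint

variable {S T : Set Ordinal} {a b : Ordinal}

theorem isLimitPoint_iff : IsLimitPoint S b ↔ 0 < b ∧ ∀ a < b, (S ∩ Ioo a b).Nonempty := by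
  refine and_congr_right fun _ ↦ ⟨fun hsup a ha ↦ ?_, fun h ↦ ?_⟩
  · obtain ⟨x, hx, hax⟩ := exists_lt_of_lt_csSup' (hsup ▸ ha)
    exact ⟨x, hx.1, hax, hx.2⟩
  · refine le_antisymm (csSup_le' fun x hx ↦ hx.2.le) (le_of_not_gt fun hlt ↦ ?_)
    obtain ⟨x, hx, hlt', hxb⟩ := h _ hlt
    have hbdd : BddAbove (S ∩ Iio b) := ⟨b, fun y hy ↦ hy.2.le⟩
    exact (le_csSup hbdd ⟨hx, hxb⟩).not_gt hlt'

theorem IsLimitPoint.nonempty_inter_Ioo (h : IsLimitPoint S b) (hab : a < b) :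
    (S ∩ Ioo a b).Nonempty :=
  (isLimitPoint_iff.1 h).2 a hab

theorem IsLimitPoint.mono (hST : S ⊆ T) (h : IsLimitPoint S b) : IsLimitPoint T b := by
  refine isLimitPoint_iff.2 ⟨h.1, fun a hab ↦ ?_⟩
  obtain ⟨x, hx, hax, hxb⟩ := h.nonempty_inter_Ioo hab
  exact ⟨x, hST hx, hax, hxb⟩

theorem IsLimitPoint.csSup_inter_Ioo (h : IsLimitPoint S b) (hab : a < b) :
    sSup (S ∩ Ioo a b) = b := by
  refine le_antisymm (csSup_le' fun x hx ↦ hx.2.2.le) (le_of_not_gt fun hlt ↦ ?_)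
  obtain ⟨x, hx, hax, hxb⟩ := h.nonempty_inter_Ioo (max_lt hab hlt)
  have hbdd : BddAbove (S ∩ Ioo a b) := ⟨b, fun y hy ↦ hy.2.2.le⟩
  exact (le_csSup hbdd ⟨hx, (le_max_left _ _).trans_lt hax, hxb⟩).not_gt
    ((le_max_right _ _).trans_lt hax)

theorem IsClosedSet.csSup_mem (hS : IsClosedSet S) (hTS : T ⊆ S) (hne : T.Nonempty)
    (hbdd : BddAbove T) : sSup T ∈ S := by
  by_cases hmem : sSup T ∈ T
  · exact hTS hmem
  have hlt : ∀ x ∈ T, x < sSup T := fun x hx ↦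
    (le_csSup hbdd hx).lt_of_ne fun h ↦ hmem (h ▸ hx)
  refine hS _ (IsLimitPoint.mono hTS (isLimitPoint_iff.2 ⟨?_, fun a ha ↦ ?_⟩))
  · obtain ⟨x, hx⟩ := hne
    exact zero_le.trans_lt (hlt x hx)
  · obtain ⟨x, hx, hax⟩ := exists_lt_of_lt_csSup hne ha
    exact ⟨x, hx, hax, hlt x hx⟩

theorem not_isLimitPoint_of_csSup_limitPoints_lt {I B : Set Ordinal} {δ x : Ordinal} (hxB : x ∈ B)
    (hxδ : x < δ) (hσx : sSup {β ∈ B | β < δ ∧ IsLimitPoint I β} < x) : ¬ IsLimitPoint I x :=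
  fun hx ↦ hσx.not_ge (le_csSup ⟨δ, fun _ hβ ↦ hβ.2.1.le⟩ ⟨hxB, hxδ, hx⟩)

end LimitPoint

section Enumeration

variable {I : Set Ordinal}

theorem isLimitPoint_enumOrd_iff (hcl : IsClosedSet I) (hunb : ¬ BddAbove I) {o : Ordinal} :
    IsLimitPoint I (enumOrd I o) ↔ IsSuccLimit o := by
  have hmono := enumOrd_strictMono hunb
  constructor
  · intro h
    have hbetween : ∀ a < enumOrd I o, ∃ d, a < enumOrd I d ∧ d < o := fun a ha ↦ by
      obtain ⟨x, hx, hax, hxo⟩ := h.nonempty_inter_Ioo ha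
      obtain ⟨d, rfl⟩ := enumOrd_surjective hunb hx
      exact ⟨d, hax, hmono.lt_iff_lt.1 hxo⟩
    refine isSuccLimit_iff.2 ⟨?_, fun c hc ↦ ?_⟩
    · obtain ⟨d, -, hd⟩ := hbetween 0 h.1
      exact (zero_le.trans_lt hd).ne'
    · obtain ⟨d, hcd, hdo⟩ := hbetween _ (hmono hc.lt)
      exact hc.2 (hmono.lt_iff_lt.1 hcd) hdo
  · intro ho
    have hnormal := isNormal_enumOrd (fun _ hT hne hbdd ↦ hcl.csSup_mem hT hne hbdd) hunb
    refine isLimitPoint_iff.2 ⟨zero_le.trans_lt (hmono ho.bot_lt), fun a ha ↦ ?_⟩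
    obtain ⟨c, hc, hac⟩ := (hnormal.lt_iff_exists_lt ho).1 ha
    exact ⟨_, enumOrd_mem hunb c, hac, hmono hc⟩

theorem isGreatest_enumOrd_succ (hunb : ¬ BddAbove I) (c : Ordinal) :
    IsGreatest (I ∩ Iio (enumOrd I (succ c))) (enumOrd I c) := by
  have hmono := enumOrd_strictMono hunb
  refine ⟨⟨enumOrd_mem hunb c, hmono (lt_succ c)⟩, fun y ⟨hy, hyc⟩ ↦ ?_⟩
  obtain ⟨d, rfl⟩ := enumOrd_surjective hunb hy
  exact hmono.monotone (lt_succ_iff.1 (hmono.lt_iff_lt.1 hyc))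

end Enumeration

section Gap

variable {I B G : Set Ordinal}

theorem exists_isGap_mem {x : Ordinal} (hx : x ∈ I \ B) : ∃ G, IsGap I B G ∧ x ∈ G := by
  set F : Set (Set Ordinal) :=
    {C | x ∈ C ∧ C ⊆ I \ B ∧ ∀ a ∈ C, ∀ b ∈ C, ∀ z ∈ I \ B, a ≤ z → z ≤ b → z ∈ C}
  have hsingleton : {x} ∈ F := by
    refine ⟨rfl, singleton_subset_iff.2 hx, ?_⟩
    rintro a rfl b rfl z - h1 h2
    exact le_antisymm h2 h1
  have hx_mem : x ∈ ⋃₀ F := ⟨{x}, hsingleton, rfl⟩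
  refine ⟨⋃₀ F, ⟨⟨x, hx_mem⟩, sUnion_subset fun C hC ↦ hC.2.1, ?_, ?_⟩, hx_mem⟩
  · rintro a ⟨C₁, hC₁, ha⟩ b ⟨C₂, hC₂, hb⟩ z hz h1 h2
    rcases le_total z x with hzx | hxz
    · exact ⟨C₁, hC₁, hC₁.2.2 a ha x hC₁.1 z hz h1 hzx⟩
    · exact ⟨C₂, hC₂, hC₂.2.2 x hC₂.1 b hb z hz hxz h2⟩
  · intro G' hsub hsub' hconv
    exact (subset_sUnion_of_mem (show G' ∈ F from ⟨hsub hx_mem, hsub', hconv⟩)).antisymm hsub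

theorem IsGap.eq_of_mem {G' : Set Ordinal} (hG : IsGap I B G) (hG' : IsGap I B G') {x : Ordinal}
    (hx : x ∈ G) (hx' : x ∈ G') : G = G' := by
  have hconv : ∀ a ∈ G ∪ G', ∀ b ∈ G ∪ G', ∀ z ∈ I \ B, a ≤ z → z ≤ b → z ∈ G ∪ G' := by
    rintro a ha b hb z hz haz hzb
    rcases le_total z x with hzx | hxz
    · exact ha.imp (fun ha ↦ hG.2.2.1 a ha x hx z hz haz hzx)
        (fun ha ↦ hG'.2.2.1 a ha x hx' z hz haz hzx)
    · exact hb.imp (fun hb ↦ hG.2.2.1 x hx b hb z hz hxz hzb)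
        (fun hb ↦ hG'.2.2.1 x hx' b hb z hz hxz hzb)
  have hsub : G ∪ G' ⊆ I \ B := union_subset hG.2.1 hG'.2.1
  rw [← hG.2.2.2 _ subset_union_left hsub hconv, hG'.2.2.2 _ subset_union_right hsub hconv]

theorem isLimitPoint_gapFoot (h : IsLeast G (GapFoot B G)) (hne : GapFoot B G ≠ 0) :
    IsLimitPoint B (GapFoot B G) := by
  have hfoot : GapFoot B G = sSup (insert 0 (B ∩ Iio (GapFoot B G))) := by
    conv_lhs => rw [GapFoot, h.csInf_eq]
    rfl
  have hnonempty : (B ∩ Iio (GapFoot B G)).Nonempty := by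
    by_contra hempty
    rw [not_nonempty_iff_eq_empty.1 hempty, insert_empty_eq, csSup_singleton] at hfoot
    exact hne hfoot
  refine ⟨pos_iff_ne_zero.2 hne, ?_⟩
  rw [csSup_insert ⟨_, fun y hy ↦ hy.2.le⟩ hnonempty, max_eq_right zero_le] at hfoot
  exact hfoot.symm

end Gap

theorem exists_isSuccPrelimit_add_omega0_eq (ν : Ordinal) :
    ∃ ξ, IsSuccPrelimit ξ ∧ ξ + ω = ν + ω := by
  refine ⟨ω * (ν / ω), isSuccPrelimit_mul_left isSuccLimit_omega0, ?_⟩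
  conv_rhs => rw [← div_add_mod ν ω, add_assoc, add_omega0 (mod_lt ν omega0_ne_zero)]

theorem exists_natCast_of_le_of_lt_add_omega0 {ξ c : Ordinal} (h₁ : ξ ≤ c) (h₂ : c < ξ + ω) :
    ∃ n : ℕ, c = ξ + n := by
  obtain ⟨n, hn⟩ := lt_omega0.1 (sub_lt_of_lt_add h₂ omega0_pos)
  exact ⟨n, by rw [← hn, Ordinal.add_sub_cancel_of_le h₁]⟩

theorem Nat.forall_of_succ_of_frequently {P : ℕ → Prop} (hsucc : ∀ n, P (n + 1) → P n)
    (hfreq : ∀ n, ∃ m, n < m ∧ P m) (n : ℕ) : P n := by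
  obtain ⟨m, hnm, hm⟩ := hfreq n
  exact Nat.decreasingInduction (motive := fun k _ ↦ P k) (fun k _ ↦ hsucc k) hm hnm.le

theorem type_lt_eq_omega0_of_subset_range {α : Type*} [LinearOrder α] [WellFoundedLT α]
    {f : ℕ → α} (hf : StrictMono f) {T : Set α} (hT : T ⊆ range f) (hinf : T.Infinite) :
    Ordinal.type ((· < ·) : T → T → Prop) = ω := by
  have hS : (f ⁻¹' T).Infinite := fun hfin ↦
    hinf (by simpa [image_preimage_eq_of_subset hT] using hfin.image f)
  have := hS.to_subtype
  have hsurj : Function.Surjective fun n : f ⁻¹' T ↦ (⟨f n, n.2⟩ : T) := by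
    rintro ⟨x, hx⟩
    obtain ⟨n, rfl⟩ := hT hx
    exact ⟨⟨n, hx⟩, rfl⟩
  let iso : ℕ ≃o T := (Nat.Subtype.orderIsoOfNat _).trans
    (StrictMono.orderIsoOfSurjective _ (fun _ _ h ↦ hf h) hsurj)
  simpa using iso.toRelIsoLT.ordinal_lift_type_eq.symm

section Block

variable {I B C : Set Ordinal} {ξ δ : Ordinal}

theorem exists_eq_enumOrd_add_natCast (hunb : ¬ BddAbove I) {x : Ordinal} (hx : x ∈ I)
    (h₁ : enumOrd I ξ ≤ x) (h₂ : x < enumOrd I (ξ + ω)) : ∃ n : ℕ, x = enumOrd I (ξ + n) := by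
  have hmono := enumOrd_strictMono hunb
  obtain ⟨c, rfl⟩ := enumOrd_surjective hunb hx
  obtain ⟨n, rfl⟩ := exists_natCast_of_le_of_lt_add_omega0 (hmono.le_iff_le.1 h₁)
    (hmono.lt_iff_lt.1 h₂)
  exact ⟨n, rfl⟩

theorem not_isLimitPoint_of_mem_Ioo (hcl : IsClosedSet I) (hunb : ¬ BddAbove I) {x : Ordinal}
    (hx : x ∈ I) (hxξ : x ∈ Ioo (enumOrd I ξ) (enumOrd I (ξ + ω))) : ¬ IsLimitPoint I x := by
  obtain ⟨n, rfl⟩ := exists_eq_enumOrd_add_natCast hunb hx hxξ.1.le hxξ.2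
  rcases n with _ | n
  · simp at hxξ
  · rw [isLimitPoint_enumOrd_iff hcl hunb, Nat.cast_succ, ← add_assoc, ← succ_eq_add_one]
    exact not_isSuccLimit_succ _

theorem inter_Ico_subset_of_isLimitPoint (hunb : ¬ BddAbove I) (hCI : C ⊆ I)
    (hpred : ∀ β ∈ C, ∀ m, IsGreatest (I ∩ Iio β) m → m ∈ C)
    (hlim : IsLimitPoint C (enumOrd I (ξ + ω))) :
    I ∩ Ico (enumOrd I ξ) (enumOrd I (ξ + ω)) ⊆ C := by
  have hmono := enumOrd_strictMono hunb
  have hblock : ∀ n : ℕ, enumOrd I (ξ + n) ∈ C := by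
    refine Nat.forall_of_succ_of_frequently (fun n hn ↦ hpred _ hn _ ?_) fun n ↦ ?_
    · rw [Nat.cast_succ, ← add_assoc, ← succ_eq_add_one]
      exact isGreatest_enumOrd_succ hunb _
    · have hn : enumOrd I (ξ + n) < enumOrd I (ξ + ω) :=
        hmono (add_lt_add_right (natCast_lt_omega0 n) ξ)
      obtain ⟨x, hx, hnx, hxω⟩ := hlim.nonempty_inter_Ioo hn
      obtain ⟨m, rfl⟩ := exists_eq_enumOrd_add_natCast hunb (hCI hx)
        (hmono.monotone le_self_add |>.trans hnx.le) hxω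
      exact ⟨m, by exact_mod_cast (add_lt_add_iff_left ξ).1 (hmono.lt_iff_lt.1 hnx), hx⟩
  rintro x ⟨hx, hξx, hxω⟩
  obtain ⟨n, rfl⟩ := exists_eq_enumOrd_add_natCast hunb hx hξx hxω
  exact hblock n

theorem enumOrd_mem_of_mem_isGap (hcl : IsClosedSet I) (hunb : ¬ BddAbove I)
    (hB : LimitSuitable I B) (hIoo : I ∩ Ioo (enumOrd I ξ) (enumOrd I (ξ + ω)) ⊆ B)
    {G : Set Ordinal} (hG : IsGap I B G) (hωG : enumOrd I (ξ + ω) ∈ G) (hξG : enumOrd I ξ ∉ G) :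
    enumOrd I ξ ∈ B := by
  have hBI : B ⊆ I := fun b hb ↦ hB.1.1 (Or.inl hb)
  have hmono := enumOrd_strictMono hunb
  have hξω : enumOrd I ξ < enumOrd I (ξ + ω) := hmono (lt_add_of_pos_right ξ omega0_pos)
  by_contra hξB
  obtain ⟨G', hG', hξG'⟩ := exists_isGap_mem ⟨enumOrd_mem hunb ξ, hξB⟩
  have hbound : ∀ y ∈ G', y ≤ enumOrd I ξ := by
    intro y hy
    by_contra! hξy
    rcases lt_or_ge y (enumOrd I (ξ + ω)) with hyω | hωy
    · exact (hG'.2.1 hy).2 (hIoo ⟨(hG'.2.1 hy).1, hξy, hyω⟩)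
    · have hωG' := hG'.2.2.1 _ hξG' _ hy _ (hG.2.1 hωG) hξω.le hωy
      exact hξG (hG.eq_of_mem hG' hωG hωG' ▸ hξG')
  rcases (hB.2 G' hG').1 with ⟨hG'unb, -⟩ | ⟨δ', ⟨⟨hδ'B, hδ'G'⟩, hδ'least⟩, hδ'lim, -⟩
  · obtain ⟨y, hy, hξy⟩ := hG'unb (enumOrd I ξ)
    exact (hbound y hy).not_gt hξy
  · have hξ1 : enumOrd I ξ < enumOrd I (ξ + 1) := hmono (lt_add_one ξ)
    have h1ω : enumOrd I (ξ + 1) < enumOrd I (ξ + ω) :=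
      hmono (add_lt_add_right one_lt_omega0 ξ)
    have hδ'1 : δ' ≤ enumOrd I (ξ + 1) :=
      hδ'least ⟨hIoo ⟨enumOrd_mem hunb _, hξ1, h1ω⟩, fun g hg ↦ (hbound g hg).trans_lt hξ1⟩
    exact not_isLimitPoint_of_mem_Ioo hcl hunb (hBI hδ'B)
      ⟨hδ'G' _ hξG', hδ'1.trans_lt h1ω⟩ hδ'lim

theorem inter_Ico_subset_of_isLimitPoint_of_mem_isGap (hcl : IsClosedSet I)
    (hunb : ¬ BddAbove I) (hB : LimitSuitable I B) {G : Set Ordinal} (hG : IsGap I B G)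
    (hωG : enumOrd I (ξ + ω) ∈ G) (hξG : enumOrd I ξ ∉ G)
    (hlim : IsLimitPoint B (enumOrd I (ξ + ω))) :
    I ∩ Ico (enumOrd I ξ) (enumOrd I (ξ + ω)) ⊆ B := by
  have hBI : B ⊆ I := fun b hb ↦ hB.1.1 (Or.inl hb)
  have hIoo : I ∩ Ioo (enumOrd I ξ) (enumOrd I (ξ + ω)) ⊆ B := fun x hx ↦
    (inter_Ico_subset_of_isLimitPoint hunb hB.1.1 hB.1.2.2.2.2
      (hlim.mono subset_union_left) ⟨hx.1, hx.2.1.le, hx.2.2⟩).resolve_right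
    fun hxB ↦ not_isLimitPoint_of_mem_Ioo hcl hunb hx.1 hx.2 (hxB.mono hBI)
  rintro x ⟨hx, hξx, hxω⟩
  rcases hξx.eq_or_lt with rfl | hξx
  · exact enumOrd_mem_of_mem_isGap hcl hunb hB hIoo hG hωG hξG
  · exact hIoo ⟨hx, hξx, hxω⟩

theorem csSup_limitPoints_le (hcl : IsClosedSet I) (hunb : ¬ BddAbove I) (hBI : B ⊆ I)
    (hδ : ∀ β ∈ B, β < δ → β < enumOrd I (ξ + ω)) :
    sSup {β ∈ B | β < δ ∧ IsLimitPoint I β} ≤ enumOrd I ξ :=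
  csSup_le' fun β ⟨hβB, hβδ, hβlim⟩ ↦ le_of_not_gt fun hξβ ↦
    not_isLimitPoint_of_mem_Ioo hcl hunb (hBI hβB) ⟨hξβ, hδ β hβB hβδ⟩ hβlim

theorem enumOrd_le_of_csSup_limitPoints_lt (hcl : IsClosedSet I) (hunb : ¬ BddAbove I)
    (hξ : IsSuccPrelimit ξ) (hξB : enumOrd I ξ ∈ B) (hξδ : enumOrd I ξ < δ) {x : Ordinal}
    (hx : x ∈ I) (hσx : sSup {β ∈ B | β < δ ∧ IsLimitPoint I β} < x) : enumOrd I ξ ≤ x := by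
  rcases eq_or_ne ξ 0 with rfl | hξ0
  · rw [enumOrd_zero]
    exact csInf_le' hx
  have hξlim : IsLimitPoint I (enumOrd I ξ) :=
    (isLimitPoint_enumOrd_iff hcl hunb).2 (isSuccLimit_iff.2 ⟨hξ0, hξ⟩)
  have hbdd : BddAbove {β ∈ B | β < δ ∧ IsLimitPoint I β} := ⟨δ, fun _ hβ ↦ hβ.2.1.le⟩
  exact (le_csSup hbdd ⟨hξB, hξδ, hξlim⟩).trans hσx.le

theorem type_inter_Ioo_eq_omega0 (hunb : ¬ BddAbove I) {σ : Ordinal}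
    (hσ : σ < enumOrd I (ξ + ω)) (hlim : IsLimitPoint I (enumOrd I (ξ + ω)))
    (hξ : ∀ x ∈ I ∩ Ioo σ (enumOrd I (ξ + ω)), enumOrd I ξ ≤ x) :
    Ordinal.type ((· < ·) : (I ∩ Ioo σ (enumOrd I (ξ + ω)) : Set Ordinal) →
      (I ∩ Ioo σ (enumOrd I (ξ + ω)) : Set Ordinal) → Prop) = ω := by
  refine type_lt_eq_omega0_of_subset_range (f := fun n : ℕ ↦ enumOrd I (ξ + n))
    ((enumOrd_strictMono hunb).comp fun m n h ↦ add_lt_add_right (Nat.cast_lt.2 h) ξ)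
    (fun x hx ↦ ?_) fun hfin ↦ ?_
  · obtain ⟨n, rfl⟩ := exists_eq_enumOrd_add_natCast hunb hx.1 (hξ x hx) hx.2.2
    exact ⟨n, rfl⟩
  · have hsup := hlim.csSup_inter_Ioo hσ
    exact (hsup ▸ (hlim.nonempty_inter_Ioo hσ).csSup_mem hfin).2.2.false

end Block

/-- The tail of a gap `G = I ∩ [λ, δ)` of a limit suitable set `B` with `λ ≠ 0`: letting `σ'` be
the supremum of the members of `B` below `δ` that are limit points of `I`, the set `I ∩ (σ', λ)`
is a nonempty subset of `B` consisting of non-limit-points of `I`, of order type exactly `ω`,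
with supremum `λ`. -/
theorem stmt7 (I B G : Set Ordinal) (hIcl : IsClosedSet I) (hIunb : IsUnboundedSet I)
    (hB : LimitSuitable I B) (hG : IsGap I B G) (δ : Ordinal)
    (hGeq : G = I ∩ Ico (GapFoot B G) δ) (hlam : GapFoot B G ≠ 0) :
    sSup {β ∈ B | β < δ ∧ IsLimitPoint I β} < GapFoot B G ∧
    (I ∩ Ioo (sSup {β ∈ B | β < δ ∧ IsLimitPoint I β}) (GapFoot B G)).Nonempty ∧
    I ∩ Ioo (sSup {β ∈ B | β < δ ∧ IsLimitPoint I β}) (GapFoot B G) ⊆ B ∧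
    (∀ x ∈ I ∩ Ioo (sSup {β ∈ B | β < δ ∧ IsLimitPoint I β}) (GapFoot B G),
      ¬ IsLimitPoint I x) ∧
    Ordinal.type ((· < ·) :
        (I ∩ Ioo (sSup {β ∈ B | β < δ ∧ IsLimitPoint I β}) (GapFoot B G) : Set Ordinal) →
        (I ∩ Ioo (sSup {β ∈ B | β < δ ∧ IsLimitPoint I β}) (GapFoot B G) : Set Ordinal) → Prop)
      = Ordinal.omega0 ∧
    sSup (I ∩ Ioo (sSup {β ∈ B | β < δ ∧ IsLimitPoint I β}) (GapFoot B G)) = GapFoot B G := by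
  have hunb : ¬ BddAbove I := fun ⟨a, ha⟩ ↦
    let ⟨b, hb, hab⟩ := hIunb a; (ha hb).not_gt hab
  have hBI : B ⊆ I := fun b hb ↦ hB.1.1 (Or.inl hb)
  obtain ⟨ν, hν⟩ := (hB.2 G hG).2 hlam
  obtain ⟨ξ, hξ, hξν⟩ := exists_isSuccPrelimit_add_omega0_eq ν
  rw [← hξν] at hν
  set lam := GapFoot B G
  set σ := sSup {β ∈ B | β < δ ∧ IsLimitPoint I β}
  have hmem_G : ∀ {x}, x ∈ G ↔ x ∈ I ∧ lam ≤ x ∧ x < δ := by rw [hGeq]; rfl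
  obtain ⟨g, hg⟩ := hG.1
  have hleast : IsLeast G lam := ⟨hmem_G.2 ⟨hν ▸ enumOrd_mem hunb _, le_rfl,
    (hmem_G.1 hg).2.1.trans_lt (hmem_G.1 hg).2.2⟩, fun x hx ↦ (hmem_G.1 hx).2.1⟩
  have hBlam : ∀ β ∈ B, β < δ → β < lam := fun β hβB hβδ ↦ lt_of_not_ge fun hlamβ ↦
    (hG.2.1 (hmem_G.2 ⟨hBI hβB, hlamβ, hβδ⟩)).2 hβB
  have hlim : IsLimitPoint B lam := isLimitPoint_gapFoot hleast hlam
  rw [hν] at hleast hlim hBlam hmem_G ⊢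
  have hξω : enumOrd I ξ < enumOrd I (ξ + ω) :=
    enumOrd_strictMono hunb (lt_add_of_pos_right ξ omega0_pos)
  have hωδ : enumOrd I (ξ + ω) < δ := (hmem_G.1 hleast.1).2.2
  have hIco := inter_Ico_subset_of_isLimitPoint_of_mem_isGap hIcl hunb hB hG hleast.1
    (fun hξG ↦ (hleast.2 hξG).not_gt hξω) hlim
  have hσω : σ < enumOrd I (ξ + ω) := (csSup_limitPoints_le hIcl hunb hBI hBlam).trans_lt hξω
  have hξle : ∀ x ∈ I ∩ Ioo σ (enumOrd I (ξ + ω)), enumOrd I ξ ≤ x := fun x hx ↦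
    enumOrd_le_of_csSup_limitPoints_lt hIcl hunb hξ (hIco ⟨enumOrd_mem hunb ξ, le_rfl, hξω⟩)
      (hξω.trans hωδ) hx.1 hx.2.1
  have htail : I ∩ Ioo σ (enumOrd I (ξ + ω)) ⊆ B := fun x hx ↦ hIco ⟨hx.1, hξle x hx, hx.2.2⟩
  have hlimI := hlim.mono hBI
  exact ⟨hσω, hlimI.nonempty_inter_Ioo hσω, htail,
    fun x hx ↦ not_isLimitPoint_of_csSup_limitPoints_lt (htail hx) (hx.2.2.trans hωδ) hx.2.1,
    type_inter_Ioo_eq_omega0 hunb hσω hlimI hξle, hlimI.csSup_inter_Ioo hσω⟩
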